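/- arXiv:1410.2826 — 5 statements merged into one kernel-verified Lean document; each statement's English description precedes it below -/
import Mathlib

section
/- Let γ be a Livsic-type tensor, let v_0,…,v_{d−k−1}, u ∈ ℂ^{d+1}, and suppose the endomorphism G := γ(v_0,…,v_{d−k−1}) is invertible. Let t^{(1)},…,t^{(r)} ∈ ℂ^{d−k} be pairwise distinct tuples, set μ_s = u + Σ_{j=0}^{d−k−1} t^{(s)}_j v_j, and let W_s = {w ∈ ℂ^n : (γ∧μ_s)(w) = 0} be the kernel of γ∧μ_s. Then the subspaces W_1, …, W_r of ℂ^n are linearly independent (i.e., if w_s ∈ W_s and w_1 + ⋯ + w_r = 0 then all w_s = 0); consequently Σ_{s=1}^r dim W_s ≤ n. (Linear-independence statement of Lemma 2.9 and the dimension bound underlying Corollary 2.10, deg(γ) ≤ n.) -/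
/-!
STATEMENT 0 (Paper Lemma 2.3). Let `γ : ℂⁿ →ₗ ⋀^{k+1}ℂ^{d+1} ⊗ ℂⁿ` be a Livsic-type
tensor, `v₀,…,v_{d−k−1} ∈ ℂ^{d+1}`, and `μ ≠ 0` in the span of the `vⱼ`.
If `(γ∧μ)(w) = 0` then `γ(v₀,…,v_{d−k−1})(w) = 0`; in particular if `w ≠ 0`
the endomorphism `γ(v₀,…,v_{d−k−1})` is not injective.
-/

noncomputable section

open ExteriorAlgebra TensorProduct

/-- `ℂ^{d+1}`. -/
abbrev Ed (d : ℕ) : Type := Fin (d + 1) → ℂ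

/-- The wedge product `v 0 ∧ v 1 ∧ ⋯` of a finite family of vectors, as an element of the
exterior algebra. -/
def wedgeVecs {d m : ℕ} (v : Fin m → Ed d) : ExteriorAlgebra ℂ (Ed d) :=
  (List.ofFn fun j => ExteriorAlgebra.ι ℂ (v j)).prod

/-- `ω = e₀ ∧ e₁ ∧ ⋯ ∧ e_d`, the generator of the top exterior power. -/
def omegaTop (d : ℕ) : ExteriorAlgebra ℂ (Ed d) :=
  wedgeVecs (fun i : Fin (d + 1) => (Pi.single i 1 : Ed d))

/-- Exterior multiplication by `x` tensored with the identity of `ℂⁿ`: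
`m_x ⊗ id : ⋀E ⊗ ℂⁿ → ⋀E ⊗ ℂⁿ`. -/
def mulTensor {d : ℕ} (n : ℕ) (x : ExteriorAlgebra ℂ (Ed d)) :
    (ExteriorAlgebra ℂ (Ed d)) ⊗[ℂ] (Fin n → ℂ) →ₗ[ℂ]
      (ExteriorAlgebra ℂ (Ed d)) ⊗[ℂ] (Fin n → ℂ) :=
  TensorProduct.map (LinearMap.mulLeft ℂ x) LinearMap.id

/-- The condition that a Livsic-type tensor takes its values in
`⋀^{k+1}ℂ^{d+1} ⊗ ℂⁿ ⊆ ⋀ℂ^{d+1} ⊗ ℂⁿ`. -/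
def IsLivsicTensor (d k n : ℕ)
    (γ : (Fin n → ℂ) →ₗ[ℂ] (ExteriorAlgebra ℂ (Ed d)) ⊗[ℂ] (Fin n → ℂ)) : Prop :=
  ∀ w : Fin n → ℂ,
    γ w ∈ LinearMap.range ((Submodule.subtype (⋀[ℂ]^(k+1) (Ed d))).rTensor (Fin n → ℂ))


/-!
STATEMENT 5 (Lemma 2.9 / Corollary 2.10). If `G := γ(v₀,…,v_{d−k−1})` is invertible and
`t⁽¹⁾,…,t⁽ʳ⁾ ∈ ℂ^{d−k}` are pairwise distinct, with `μ_s = u + Σⱼ t⁽ˢ⁾ⱼ vⱼ` and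
`W_s = ker (γ∧μ_s)`, then the subspaces `W₁,…,W_r` are linearly independent and
`Σ_s dim W_s ≤ n`.
-/

/-! ### Auxiliary lemmas -/

lemma wedgeVecs_eq_iMulti {d m : ℕ} (v : Fin m → Ed d) :
    wedgeVecs v = ExteriorAlgebra.ιMulti ℂ m v := by
  rw [wedgeVecs, ExteriorAlgebra.ιMulti_apply]

lemma mulTensor_mul {d : ℕ} (n : ℕ) (x y : ExteriorAlgebra ℂ (Ed d)) :
    mulTensor n (x * y) = (mulTensor n x) ∘ₗ (mulTensor n y) := by
  rw [mulTensor, mulTensor, mulTensor, LinearMap.mulLeft_mul, ← TensorProduct.map_comp,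
    LinearMap.id_comp]

lemma mulTensor_add {d : ℕ} (n : ℕ) (x y : ExteriorAlgebra ℂ (Ed d)) :
    mulTensor n (x + y) = mulTensor n x + mulTensor n y := by
  rw [mulTensor, mulTensor, mulTensor, ← TensorProduct.map_add_left]
  congr 1
  ext a
  simp [add_mul]

lemma mulTensor_smul {d : ℕ} (n : ℕ) (c : ℂ) (x : ExteriorAlgebra ℂ (Ed d)) :
    mulTensor n (c • x) = c • mulTensor n x := by
  rw [mulTensor, mulTensor, ← TensorProduct.map_smul_left]
  congr 1
  ext a
  simp [smul_mul_assoc]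

/-- Any wedge of vectors factors (up to sign) with its `j`-th vector rightmost. -/
lemma iMulti_factor {d m : ℕ} (f : Fin m → Ed d) (j : Fin m) :
    ∃ z : ExteriorAlgebra ℂ (Ed d),
      ExteriorAlgebra.ιMulti ℂ m f = z * ExteriorAlgebra.ι ℂ (f j) := by
  classical
  obtain ⟨m', rfl⟩ : ∃ m', m = m' + 1 := ⟨m - 1, (Nat.succ_pred_eq_of_pos j.pos).symm⟩
  set σ : Equiv.Perm (Fin (m' + 1)) := Equiv.swap (Fin.last m') j with hσ
  have hf : f = (f ∘ σ) ∘ (σ⁻¹ : Equiv.Perm (Fin (m' + 1))) := by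
    funext i; simp
  have hperm :
      ExteriorAlgebra.ιMulti ℂ (m' + 1) ((f ∘ σ) ∘ (σ⁻¹ : Equiv.Perm (Fin (m' + 1)))) =
        Equiv.Perm.sign σ⁻¹ • ExteriorAlgebra.ιMulti ℂ (m' + 1) (f ∘ σ) :=
    AlternatingMap.map_perm _ _ _
  have hlast : (f ∘ σ) (Fin.last m') = f j := by
    simp [hσ, Equiv.swap_apply_left]
  have hsplit : ExteriorAlgebra.ιMulti ℂ (m' + 1) (f ∘ σ) =
      ((List.ofFn fun i : Fin m' => ExteriorAlgebra.ι ℂ ((f ∘ σ) i.castSucc)).prod) *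
        ExteriorAlgebra.ι ℂ (f j) := by
    rw [ExteriorAlgebra.ιMulti_apply, List.ofFn_succ', List.concat_eq_append,
      List.prod_append, List.prod_singleton, hlast]
  refine ⟨((Equiv.Perm.sign σ⁻¹ : ℤˣ) : ℤ) •
      (List.ofFn fun i : Fin m' => ExteriorAlgebra.ι ℂ ((f ∘ σ) i.castSucc)).prod, ?_⟩
  have : ExteriorAlgebra.ιMulti ℂ (m' + 1) f = Equiv.Perm.sign σ⁻¹ •
      (((List.ofFn fun i : Fin m' => ExteriorAlgebra.ι ℂ ((f ∘ σ) i.castSucc)).prod) *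
        ExteriorAlgebra.ι ℂ (f j)) := by
    rw [← hsplit, ← hperm, ← hf]
  rw [this, Units.smul_def, smul_mul_assoc]

/-- Multilinear expansion of a wedge in its `j`-th slot. -/
lemma iMulti_update {d m : ℕ} (v : Fin m → Ed d) (u : Ed d) (c : Fin m → ℂ) (j : Fin m) :
    ExteriorAlgebra.ιMulti ℂ m (Function.update v j (u + ∑ i, c i • v i)) =
      ExteriorAlgebra.ιMulti ℂ m (Function.update v j u) +
        c j • ExteriorAlgebra.ιMulti ℂ m v := by
  classical
  rw [AlternatingMap.map_update_add]
  congr 1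
  rw [← AlternatingMap.coe_multilinearMap,
    (ExteriorAlgebra.ιMulti ℂ m).toMultilinearMap.map_update_sum Finset.univ j
      (fun i => c i • v i) v, AlternatingMap.coe_multilinearMap]
  have hz : ∀ i : Fin m, i ≠ j →
      (ExteriorAlgebra.ιMulti ℂ m) (Function.update v j (c i • v i)) = 0 := by
    intro i hij
    rw [AlternatingMap.map_update_smul]
    rw [AlternatingMap.map_eq_zero_of_eq (ExteriorAlgebra.ιMulti ℂ m)
      (Function.update v j (v i)) (i := i) (j := j) ?_ hij, smul_zero]
    rw [Function.update_self, Function.update_of_ne hij]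
  rw [Finset.sum_eq_single j (fun i _ hij => hz i hij) (by simp)]
  rw [AlternatingMap.map_update_smul, Function.update_eq_self]

/-- A linear functional on the exterior algebra extracting the top-degree coefficient. -/
def detTop (d : ℕ) : ExteriorAlgebra ℂ (Ed d) →ₗ[ℂ] ℂ :=
  ExteriorAlgebra.liftAlternating fun i =>
    if h : i = d + 1 then
      h.symm ▸ (Matrix.detRowAlternating : AlternatingMap ℂ (Fin (d + 1) → ℂ) ℂ (Fin (d + 1)))
    else 0

lemma detTop_iMulti {d : ℕ} (f : Fin (d + 1) → Ed d) :
    detTop d (ExteriorAlgebra.ιMulti ℂ (d + 1) f) = Matrix.det (Matrix.of f) := by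
  rw [detTop, ExteriorAlgebra.liftAlternating_apply_ιMulti]
  simp
  rfl

lemma detTop_omega (d : ℕ) : detTop d (omegaTop d) = 1 := by
  rw [omegaTop, wedgeVecs_eq_iMulti, detTop_iMulti]
  have : (Matrix.of fun i : Fin (d + 1) => (Pi.single i 1 : Ed d)) = 1 := by
    ext i j
    simp [Matrix.one_apply, Pi.single_apply, eq_comm]
  rw [this, Matrix.det_one]

/-- Extract the `ℂⁿ` component of an element of `⋀E ⊗ ℂⁿ` against the top form. -/
def extMap (d n : ℕ) :
    (ExteriorAlgebra ℂ (Ed d)) ⊗[ℂ] (Fin n → ℂ) →ₗ[ℂ] (Fin n → ℂ) :=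
  (TensorProduct.lid ℂ (Fin n → ℂ)).toLinearMap ∘ₗ TensorProduct.map (detTop d) LinearMap.id

lemma extMap_tmul {d n : ℕ} (x : ExteriorAlgebra ℂ (Ed d)) (y : Fin n → ℂ) :
    extMap d n (x ⊗ₜ[ℂ] y) = detTop d x • y := by
  simp [extMap]

lemma extMap_omega {d n : ℕ} (y : Fin n → ℂ) :
    extMap d n (omegaTop d ⊗ₜ[ℂ] y) = y := by
  rw [extMap_tmul, detTop_omega, one_smul]

/-- Separation of joint eigenvectors with pairwise distinct eigenvalue tuples. -/
lemma sep_eigen {V : Type*} [AddCommGroup V] [Module ℂ V] {m r : ℕ}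
    (C : Fin m → Module.End ℂ V) (t : Fin r → Fin m → ℂ) (ht : Function.Injective t)
    (w : Fin r → V) (hw : ∀ s j, C j (w s) = t s j • w s)
    (hsum : ∑ s, w s = 0) : ∀ s, w s = 0 := by
  classical
  intro s0
  have hg : ∀ s : Fin r, s ≠ s0 → ∃ j, t s j ≠ t s0 j := by
    intro s hs
    by_contra h
    push_neg at h
    exact hs (ht (funext h))
  choose g hgne using hg
  set F : Fin r → Module.End ℂ V := fun s =>
    if hs : s = s0 then 1 else C (g s hs) - t s (g s hs) • 1 with hF
  set e : Fin r → Fin r → ℂ := fun s s' =>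
    if hs : s = s0 then 1 else t s' (g s hs) - t s (g s hs) with he
  have hact : ∀ s s', F s (w s') = e s s' • w s' := by
    intro s s'
    by_cases hs : s = s0
    · simp [hF, he, hs]
    · simp only [hF, he, dif_neg hs, LinearMap.sub_apply, LinearMap.smul_apply,
        Module.End.one_apply, hw s' (g s hs), sub_smul]
  have hlist : ∀ (L : List (Fin r)) (s' : Fin r),
      (L.map F).prod (w s') = (L.map (fun s => e s s')).prod • w s' := by
    intro L s'
    induction L with
    | nil => simp
    | cons a L ih =>
      simp only [List.map_cons, List.prod_cons, Module.End.mul_apply, ih, map_smul, hact,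
        smul_smul]
      ring_nf
  set L : List (Fin r) := Finset.univ.toList with hL
  have h0 : ∑ s', (L.map (fun s => e s s')).prod • w s' = 0 := by
    have := congrArg (fun x => (L.map F).prod x) hsum
    simpa [map_sum, hlist] using this
  have hvanish : ∀ s', s' ≠ s0 → (L.map (fun s => e s s')).prod = 0 := by
    intro s' hs'
    apply List.prod_eq_zero
    refine List.mem_map.mpr ⟨s', by simp [hL], ?_⟩
    simp [he, dif_neg hs']
  rw [Finset.sum_eq_single s0 (fun s' _ hs' => by rw [hvanish s' hs', zero_smul]) (by simp)] at h0
  have hne : (L.map (fun s => e s s0)).prod ≠ 0 := by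
    intro h
    rw [List.prod_eq_zero_iff] at h
    obtain ⟨s, _, hs0⟩ := List.mem_map.mp h
    by_cases hs : s = s0
    · rw [he] at hs0
      simp only [dif_pos hs] at hs0
      exact one_ne_zero hs0
    · rw [he] at hs0
      simp only [dif_neg hs] at hs0
      exact hgne s hs (sub_eq_zero.mp hs0).symm
  exact (smul_eq_zero.mp h0).resolve_left hne


theorem stmt5 (d k n : ℕ) (hd : 1 ≤ d) (hk : k + 1 ≤ d) (hn : 1 ≤ n)
    (γ : (Fin n → ℂ) →ₗ[ℂ] (ExteriorAlgebra ℂ (Ed d)) ⊗[ℂ] (Fin n → ℂ))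
    (hγ : IsLivsicTensor d k n γ)
    (v : Fin (d - k) → Ed d) (u : Ed d)
    (G : (Fin n → ℂ) →ₗ[ℂ] (Fin n → ℂ))
    (hG : ∀ w' : Fin n → ℂ, mulTensor n (wedgeVecs v) (γ w') = omegaTop d ⊗ₜ[ℂ] G w')
    (hGinv : Function.Bijective G)
    (r : ℕ) (t : Fin r → (Fin (d - k) → ℂ)) (ht : Function.Injective t)
    (μ : Fin r → Ed d)
    (hμdef : ∀ s : Fin r, μ s = u + ∑ j : Fin (d - k), t s j • v j) :
    (∀ w : Fin r → (Fin n → ℂ),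
        (∀ s : Fin r, mulTensor n (ExteriorAlgebra.ι ℂ (μ s)) (γ (w s)) = 0) →
        (∑ s : Fin r, w s) = 0 → ∀ s : Fin r, w s = 0) ∧
      (∑ s : Fin r, Module.finrank ℂ
          (LinearMap.ker ((mulTensor n (ExteriorAlgebra.ι ℂ (μ s))) ∘ₗ γ))) ≤ n := by
  classical
  -- the inverse of `G`
  set Ge : (Fin n → ℂ) ≃ₗ[ℂ] (Fin n → ℂ) := LinearEquiv.ofBijective G hGinv with hGe
  -- the operators `C j`
  set C : Fin (d - k) → Module.End ℂ (Fin n → ℂ) := fun j =>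
    -(Ge.symm.toLinearMap ∘ₗ (extMap d n ∘ₗ
        (mulTensor n (ExteriorAlgebra.ιMulti ℂ (d - k) (Function.update v j u))) ∘ₗ γ)) with hC
  -- the key eigen-relation
  have key : ∀ (s : Fin r) (w : Fin n → ℂ),
      mulTensor n (ExteriorAlgebra.ι ℂ (μ s)) (γ w) = 0 →
      ∀ j : Fin (d - k), C j w = t s j • w := by
    intro s w hw j
    have h1 : ExteriorAlgebra.ιMulti ℂ (d - k) (Function.update v j (μ s)) =
        ExteriorAlgebra.ιMulti ℂ (d - k) (Function.update v j u) +
          t s j • ExteriorAlgebra.ιMulti ℂ (d - k) v := by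
      rw [hμdef s]
      exact iMulti_update v u (t s) j
    obtain ⟨z, hz⟩ := iMulti_factor (Function.update v j (μ s)) j
    rw [Function.update_self] at hz
    have h3 : mulTensor n (ExteriorAlgebra.ιMulti ℂ (d - k)
        (Function.update v j (μ s))) (γ w) = 0 := by
      rw [hz, mulTensor_mul, LinearMap.comp_apply, hw, map_zero]
    rw [h1, mulTensor_add, mulTensor_smul] at h3
    have h4 : mulTensor n (ExteriorAlgebra.ιMulti ℂ (d - k) (Function.update v j u)) (γ w) =
        -(t s j • (omegaTop d ⊗ₜ[ℂ] G w)) := by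
      have h5 : mulTensor n (ExteriorAlgebra.ιMulti ℂ (d - k) v) (γ w) =
          omegaTop d ⊗ₜ[ℂ] G w := by
        rw [← wedgeVecs_eq_iMulti]; exact hG w
      simp only [LinearMap.add_apply, LinearMap.smul_apply, h5] at h3
      exact eq_neg_of_add_eq_zero_left h3
    have h6 : extMap d n (mulTensor n (ExteriorAlgebra.ιMulti ℂ (d - k)
        (Function.update v j u)) (γ w)) = -(t s j • G w) := by
      rw [h4, map_neg, map_smul, extMap_omega]
    have h7 : Ge w = G w := rfl
    simp only [hC, LinearMap.neg_apply, LinearMap.comp_apply, h6, map_neg, map_smul, neg_neg,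
      ← h7, LinearEquiv.coe_coe, LinearEquiv.symm_apply_apply]
  -- part 1
  have part1 : ∀ w : Fin r → (Fin n → ℂ),
      (∀ s : Fin r, mulTensor n (ExteriorAlgebra.ι ℂ (μ s)) (γ (w s)) = 0) →
      (∑ s : Fin r, w s) = 0 → ∀ s : Fin r, w s = 0 := by
    intro w hw hsum
    exact sep_eigen C t ht w (fun s j => key s (w s) (hw s) j) hsum
  refine ⟨part1, ?_⟩
  -- part 2
  set W : Fin r → Submodule ℂ (Fin n → ℂ) := fun s =>
    LinearMap.ker ((mulTensor n (ExteriorAlgebra.ι ℂ (μ s))) ∘ₗ γ) with hW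
  set L : (∀ s : Fin r, W s) →ₗ[ℂ] (Fin n → ℂ) :=
    ∑ s : Fin r, (W s).subtype ∘ₗ LinearMap.proj s with hLdef
  have hLapp : ∀ x : ∀ s : Fin r, W s, L x = ∑ s : Fin r, (x s : Fin n → ℂ) := by
    intro x
    simp [hLdef, LinearMap.sum_apply]
  have hLinj : Function.Injective L := by
    rw [← LinearMap.ker_eq_bot, LinearMap.ker_eq_bot']
    intro x hx
    rw [hLapp] at hx
    have hmem : ∀ s : Fin r, mulTensor n (ExteriorAlgebra.ι ℂ (μ s)) (γ ((x s : Fin n → ℂ))) = 0 := by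
      intro s
      exact LinearMap.mem_ker.mp (x s).2
    have := part1 (fun s => (x s : Fin n → ℂ)) hmem hx
    funext s
    exact Subtype.ext (this s)
  have hfr : (∑ s : Fin r, Module.finrank ℂ (W s)) = Module.finrank ℂ (∀ s : Fin r, W s) :=
    (Module.finrank_pi_fintype ℂ).symm
  calc (∑ s : Fin r, Module.finrank ℂ (W s))
      = Module.finrank ℂ (∀ s : Fin r, W s) := hfr
    _ ≤ Module.finrank ℂ (Fin n → ℂ) := LinearMap.finrank_le_finrank_of_injective hLinj
    _ = n := by simp
end
end

section
/- Let γ be a Livsic-type tensor, let v_0,…,v_{d−k−1}, u ∈ ℂ^{d+1} with G := γ(v_0,…,v_{d−k−1}) invertible, and define A_i := G^{−1} ∘ γ(v_0,…,v_{i−1}, u, v_{i+1},…,v_{d−k−1}) ∈ End(ℂ^n) for i = 0,…,d−k−1. Suppose there exist pairwise distinct tuples t^{(1)},…,t^{(r)} ∈ ℂ^{d−k} such that, setting μ_s = u + Σ_j t^{(s)}_j v_j and W_s = ker(γ∧μ_s), the subspaces W_1,…,W_r together span ℂ^n. Then the endomorphisms A_0,…,A_{d−k−1} pairwise commute and are each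 diagonalizable. (Corollary 2.16: for a very reasonable tensor the pencils γ(V)^{−1}γ(V,u,j) commute and are semi-simple; here the degree condition is expressed through its consequence that the kernel fibers at the intersection points span ℂ^n.) -/
/-!
On `W_s = ker (γ ∧ μ_s)` every wedge containing `μ_s` annihilates `γ w`. Expanding
`μ_s = u + Σⱼ t⁽ˢ⁾ⱼ vⱼ` in the `i`-th slot of `v₀ ∧ ⋯ ∧ v_{d−k−1}` and using that repeated vectors
wedge to zero gives `γ(…,u,…) w = −t⁽ˢ⁾ᵢ γ(v) w`, i.e. each `A i` acts on `W_s` as the scalar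
`−t⁽ˢ⁾ᵢ`. As the `W_s` span `ℂⁿ`, the `A i` are simultaneously diagonalizable, hence commute.
-/

noncomputable section

open ExteriorAlgebra TensorProduct

theorem AlternatingMap.map_update_add_sum_smul {R M N ι : Type*} [CommSemiring R]
    [AddCommMonoid M] [Module R M] [AddCommMonoid N] [Module R N] [Fintype ι] [DecidableEq ι]
    (f : M [⋀^ι]→ₗ[R] N) (v : ι → M) (i : ι) (u : M) (c : ι → R) :
    f (Function.update v i (u + ∑ j, c j • v j)) = f (Function.update v i u) + c i • f v := by
  rw [f.map_update_add, f.map_update_sum, Finset.sum_eq_single i]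
  · rw [f.map_update_smul, Function.update_eq_self]
  · intro j _ hji
    rw [f.map_update_smul, f.map_eq_zero_of_eq _ (by simp [hji]) hji.symm, smul_zero]
  · simp

theorem ExteriorAlgebra.ιMulti_snoc {R M : Type*} [CommRing R] [AddCommGroup M] [Module R M]
    {m : ℕ} (v : Fin (m + 1) → M) :
    ιMulti R (m + 1) v = ιMulti R m (Fin.init v) * ι R (v (Fin.last m)) := by
  rw [ιMulti_apply, ιMulti_apply, List.ofFn_succ', List.prod_concat]
  rfl

theorem Module.End.commute_of_iSup_eq_top {ι R V : Type*} [CommRing R] [AddCommGroup V]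
    [Module R V] {W : ι → Submodule R V} (hW : ⨆ s, W s = ⊤) {f g : Module.End R V}
    {a b : ι → R} (hf : ∀ s, W s ≤ f.eigenspace (a s)) (hg : ∀ s, W s ≤ g.eigenspace (b s)) :
    Commute f g := by
  suffices ⊤ ≤ LinearMap.ker (f * g - g * f) from
    sub_eq_zero.1 (LinearMap.ker_eq_top.1 (top_le_iff.1 this))
  rw [← hW]
  refine iSup_le fun s w hw => ?_
  have hfw := mem_eigenspace_iff.1 (hf s hw)
  have hgw := mem_eigenspace_iff.1 (hg s hw)
  simp [hfw, hgw, smul_comm (a s)]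

theorem Module.End.iSup_eigenspace_eq_top_of_iSup_eq_top {ι R V : Type*} [CommRing R]
    [AddCommGroup V] [Module R V] {W : ι → Submodule R V} (hW : ⨆ s, W s = ⊤)
    {f : Module.End R V} {a : ι → R} (hf : ∀ s, W s ≤ f.eigenspace (a s)) :
    ⨆ c, f.eigenspace c = ⊤ :=
  top_le_iff.1 (hW ▸ iSup_le fun s => (hf s).trans (le_iSup _ (a s)))

lemma wedgeVecs_eq_ιMulti {d m : ℕ} (v : Fin m → Ed d) : wedgeVecs v = ιMulti ℂ m v :=
  (ιMulti_apply v).symm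

def mulTensorAlgHom (d n : ℕ) : ExteriorAlgebra ℂ (Ed d) →ₐ[ℂ]
    Module.End ℂ (ExteriorAlgebra ℂ (Ed d) ⊗[ℂ] (Fin n → ℂ)) :=
  (Module.End.rTensorAlgHom ℂ _ _).comp (Algebra.lmul ℂ _)

lemma mulTensorAlgHom_apply {d : ℕ} (n : ℕ) (x : ExteriorAlgebra ℂ (Ed d)) :
    mulTensorAlgHom d n x = mulTensor n x := rfl

theorem omegaTop_tmul_injective (d : ℕ) {N : Type*} [AddCommGroup N] [Module ℂ N] :
    Function.Injective (omegaTop d ⊗ₜ[ℂ] · : N → _) := by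
  classical
  -- the determinant, placed in degree `d + 1`, is a functional on `⋀ℂ^{d+1}` with `ω ↦ 1`
  set det : ∀ i : ℕ, Ed d [⋀^Fin i]→ₗ[ℂ] ℂ := Pi.single (d + 1) Matrix.detRowAlternating
  have hdet : liftAlternating det (omegaTop d) = 1 := by
    rw [omegaTop, wedgeVecs_eq_ιMulti, liftAlternating_apply_ιMulti]
    simp only [det, Pi.single_eq_same]
    change Matrix.det (.of fun j => (Pi.single j 1 : Ed d)) = 1
    rw [← Matrix.det_one (n := Fin (d + 1)) (R := ℂ)]
    congr 1
    ext i j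
    simp [Matrix.one_eq_pi_single]
  refine Function.LeftInverse.injective
    (g := TensorProduct.lid ℂ N ∘ (liftAlternating det).rTensor N) fun x => ?_
  simp [hdet]

theorem mulTensor_wedgeVecs_update_eq_zero {d n m : ℕ} (v : Fin m → Ed d) (i : Fin m) (μ : Ed d)
    {z : ExteriorAlgebra ℂ (Ed d) ⊗[ℂ] (Fin n → ℂ)} (hz : mulTensor n (ι ℂ μ) z = 0) :
    mulTensor n (wedgeVecs (Function.update v i μ)) z = 0 := by
  cases m with
  | zero => exact i.elim0
  | succ m =>
    set f := Function.update v i μ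
    set σ := Equiv.swap i (Fin.last m)
    have hperm : ιMulti ℂ (m + 1) f = σ.sign • ιMulti ℂ (m + 1) (f ∘ σ) := by
      rw [AlternatingMap.map_perm, smul_smul, Int.units_mul_self, one_smul]
    have hlast : (f ∘ σ) (Fin.last m) = μ := by simp [f, σ]
    rw [wedgeVecs_eq_ιMulti, hperm, ιMulti_snoc, hlast, ← mulTensorAlgHom_apply, Units.smul_def,
      map_zsmul, map_mul, LinearMap.smul_apply, Module.End.mul_apply, mulTensorAlgHom_apply, mulTensorAlgHom_apply, hz,
      map_zero, smul_zero]

theorem eq_neg_smul_of_mulTensor_ι_eq_zero {d n m : ℕ} {v : Fin m → Ed d} {u : Ed d}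
    {c : Fin m → ℂ} {z : ExteriorAlgebra ℂ (Ed d) ⊗[ℂ] (Fin n → ℂ)} {g gi : Fin n → ℂ}
    {i : Fin m} (hz : mulTensor n (ι ℂ (u + ∑ j, c j • v j)) z = 0)
    (hg : mulTensor n (wedgeVecs v) z = omegaTop d ⊗ₜ[ℂ] g)
    (hgi : mulTensor n (wedgeVecs (Function.update v i u)) z = omegaTop d ⊗ₜ[ℂ] gi) :
    gi = -c i • g := by
  have h := mulTensor_wedgeVecs_update_eq_zero v i _ hz
  rw [wedgeVecs_eq_ιMulti, AlternatingMap.map_update_add_sum_smul, ← wedgeVecs_eq_ιMulti,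
    ← wedgeVecs_eq_ιMulti, ← mulTensorAlgHom_apply, map_add, map_smul, LinearMap.add_apply,
    LinearMap.smul_apply, mulTensorAlgHom_apply, mulTensorAlgHom_apply, hg, hgi, ← tmul_smul,
    ← tmul_add] at h
  rw [neg_smul, eq_neg_iff_add_eq_zero]
  exact omegaTop_tmul_injective d (h.trans (tmul_zero _ _).symm)

theorem stmt6_general (d k n : ℕ)
    (γ : (Fin n → ℂ) →ₗ[ℂ] (ExteriorAlgebra ℂ (Ed d)) ⊗[ℂ] (Fin n → ℂ))
    (v : Fin (d - k) → Ed d) (u : Ed d)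
    -- `G = γ(v₀,…,v_{d−k−1})`, invertible:
    (G : (Fin n → ℂ) →ₗ[ℂ] (Fin n → ℂ))
    (hG : ∀ w' : Fin n → ℂ, mulTensor n (wedgeVecs v) (γ w') = omegaTop d ⊗ₜ[ℂ] G w')
    (hGinv : Function.Bijective G)
    -- `Gi i = γ(v₀,…,v_{i−1},u,v_{i+1},…,v_{d−k−1})`:
    (Gi : Fin (d - k) → ((Fin n → ℂ) →ₗ[ℂ] (Fin n → ℂ)))
    (hGi : ∀ (i : Fin (d - k)) (w' : Fin n → ℂ),
        mulTensor n (wedgeVecs (Function.update v i u)) (γ w') =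
          omegaTop d ⊗ₜ[ℂ] (Gi i) w')
    -- `A i = G⁻¹ ∘ Gi i`:
    (A : Fin (d - k) → Module.End ℂ (Fin n → ℂ))
    (hA : ∀ i : Fin (d - k), G ∘ₗ A i = Gi i)
    -- the kernels at the intersection points span `ℂⁿ`:
    (r : ℕ) (t : Fin r → (Fin (d - k) → ℂ)) (μ : Fin r → Ed d)
    (hμdef : ∀ s : Fin r, μ s = u + ∑ j : Fin (d - k), t s j • v j)
    (hspan : (⨆ s : Fin r,
        LinearMap.ker ((mulTensor n (ExteriorAlgebra.ι ℂ (μ s))) ∘ₗ γ)) = ⊤) :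
    (∀ i j : Fin (d - k), Commute (A i) (A j)) ∧
      (∀ i : Fin (d - k), (⨆ c : ℂ, Module.End.eigenspace (A i) c) = ⊤) := by
  have hW : ∀ s i, LinearMap.ker (mulTensor n (ι ℂ (μ s)) ∘ₗ γ) ≤ (A i).eigenspace (-t s i) := by
    intro s i w hw
    rw [Module.End.mem_eigenspace_iff]
    apply hGinv.injective
    rw [← LinearMap.comp_apply, hA, map_smul]
    rw [LinearMap.mem_ker, LinearMap.comp_apply, hμdef s] at hw
    exact eq_neg_smul_of_mulTensor_ι_eq_zero hw (hG w) (hGi i w)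
  exact ⟨fun i j => Module.End.commute_of_iSup_eq_top hspan (hW · i) (hW · j),
    fun i => Module.End.iSup_eigenspace_eq_top_of_iSup_eq_top hspan (hW · i)⟩

theorem stmt6 (d k n : ℕ) (hd : 1 ≤ d) (hk : k + 1 ≤ d) (hn : 1 ≤ n)
    (γ : (Fin n → ℂ) →ₗ[ℂ] (ExteriorAlgebra ℂ (Ed d)) ⊗[ℂ] (Fin n → ℂ))
    (hγ : IsLivsicTensor d k n γ)
    (v : Fin (d - k) → Ed d) (u : Ed d)
    -- `G = γ(v₀,…,v_{d−k−1})`, invertible: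
    (G : (Fin n → ℂ) →ₗ[ℂ] (Fin n → ℂ))
    (hG : ∀ w' : Fin n → ℂ, mulTensor n (wedgeVecs v) (γ w') = omegaTop d ⊗ₜ[ℂ] G w')
    (hGinv : Function.Bijective G)
    -- `Gi i = γ(v₀,…,v_{i−1},u,v_{i+1},…,v_{d−k−1})`:
    (Gi : Fin (d - k) → ((Fin n → ℂ) →ₗ[ℂ] (Fin n → ℂ)))
    (hGi : ∀ (i : Fin (d - k)) (w' : Fin n → ℂ),
        mulTensor n (wedgeVecs (Function.update v i u)) (γ w') =
          omegaTop d ⊗ₜ[ℂ] (Gi i) w')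
    -- `A i = G⁻¹ ∘ Gi i`:
    (A : Fin (d - k) → Module.End ℂ (Fin n → ℂ))
    (hA : ∀ i : Fin (d - k), G ∘ₗ A i = Gi i)
    -- the kernels at the intersection points span `ℂⁿ`:
    (r : ℕ) (t : Fin r → (Fin (d - k) → ℂ)) (ht : Function.Injective t)
    (μ : Fin r → Ed d)
    (hμdef : ∀ s : Fin r, μ s = u + ∑ j : Fin (d - k), t s j • v j)
    (hspan : (⨆ s : Fin r,
        LinearMap.ker ((mulTensor n (ExteriorAlgebra.ι ℂ (μ s))) ∘ₗ γ)) = ⊤) :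
    (∀ i j : Fin (d - k), Commute (A i) (A j)) ∧
      (∀ i : Fin (d - k), (⨆ c : ℂ, Module.End.eigenspace (A i) c) = ⊤) :=
  stmt6_general d k n γ v u G hG hGinv Gi hGi A hA r t μ hμdef hspan
end
end

section
/- Fix integers d ≥ 1, ℓ ≥ 0 with ℓ+2 ≤ d+1, and n ≥ 1. Let T : ⋀^{ℓ+1}ℂ^{d+1} → M_n(ℂ) be a ℂ-linear map, and let v_1,…,v_{ℓ+2} ∈ ℂ^{d+1} be linearly independent vectors such that the matrix T(v_1∧⋯∧v_{ℓ+1}) is invertible. For t ∈ ℂ, set T_t = T(v_1∧⋯∧v_ℓ∧(t·v_{ℓ+1} + v_{ℓ+2})) ∈ M_n(ℂ). Then for any finitely many pairwise distinct t_1,…,t_r ∈ ℂ, the kernel subspaces ker T_{t_1},…,ker T_{t_r} of ℂ^n are linearly independent (their sum is direct). (Kernel-independence statement of Lemma 2.15 on degeneracy loci restricted to a one-dimensional Schubert cycle.) -/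
/-!
STATEMENT 7 (Lemma 2.15, kernel independence on a one-dimensional Schubert cycle).
Let `T : ⋀^{ℓ+1}ℂ^{d+1} → Mₙ(ℂ)` be linear, `v₁,…,v_{ℓ+2}` linearly independent with
`T(v₁∧⋯∧v_{ℓ+1})` invertible. For `t ∈ ℂ` put `T_t = T(v₁∧⋯∧v_ℓ∧(t·v_{ℓ+1}+v_{ℓ+2}))`.
Then for pairwise distinct `t₁,…,t_r`, the kernels `ker T_{t₁},…,ker T_{t_r}` are linearly
independent. (Indices are 0-based below: `v 0,…,v (ℓ+1)`.)
-/

noncomputable section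

open ExteriorAlgebra

/-- The wedge product `v 0 ∧ ⋯ ∧ v (m-1)` as an element of the `m`-th exterior power. -/
def wedgePow {d m : ℕ} (v : Fin m → (Fin (d + 1) → ℂ)) :
    ⋀[ℂ]^m (Fin (d + 1) → ℂ) :=
  ⟨ExteriorAlgebra.ιMulti ℂ m v,
    ExteriorAlgebra.ιMulti_range ℂ m (Set.mem_range_self v)⟩

theorem stmt7 (d ℓ n : ℕ) (hd : 1 ≤ d) (hℓ : ℓ + 2 ≤ d + 1) (hn : 1 ≤ n)
    (T : (⋀[ℂ]^(ℓ + 1) (Fin (d + 1) → ℂ)) →ₗ[ℂ] Matrix (Fin n) (Fin n) ℂ)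
    (v : Fin (ℓ + 2) → (Fin (d + 1) → ℂ)) (hv : LinearIndependent ℂ v)
    (hinv : IsUnit (T (wedgePow (fun j : Fin (ℓ + 1) => v j.castSucc))))
    -- `Tt t = T (v 0 ∧ ⋯ ∧ v (ℓ-1) ∧ (t • v ℓ + v (ℓ+1)))`:
    (Tt : ℂ → Matrix (Fin n) (Fin n) ℂ)
    (hTt : ∀ t : ℂ, Tt t = T (wedgePow (fun j : Fin (ℓ + 1) =>
        if h : (j : ℕ) < ℓ then v ⟨(j : ℕ), by omega⟩
        else t • v ⟨ℓ, by omega⟩ + v ⟨ℓ + 1, by omega⟩)))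
    (r : ℕ) (ts : Fin r → ℂ) (hts : Function.Injective ts) :
    ∀ w : Fin r → (Fin n → ℂ),
      (∀ s : Fin r, (Tt (ts s)).mulVec (w s) = 0) →
      (∑ s : Fin r, w s) = 0 → ∀ s : Fin r, w s = 0 := by
  classical
  intro w hker hsum
  -- notation
  set i : Fin (ℓ + 1) := ⟨ℓ, Nat.lt_succ_self ℓ⟩ with hi
  set a : Fin (d + 1) → ℂ := v ⟨ℓ, by omega⟩ with ha
  set b : Fin (d + 1) → ℂ := v ⟨ℓ + 1, by omega⟩ with hb
  set vA : Fin (ℓ + 1) → (Fin (d + 1) → ℂ) := fun j => v j.castSucc with hvA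
  set vB : Fin (ℓ + 1) → (Fin (d + 1) → ℂ) :=
    fun j => if h : (j : ℕ) < ℓ then v ⟨(j : ℕ), by omega⟩ else b with hvB
  have hieq : (i : ℕ) = ℓ := rfl
  have hupA : Function.update vB i a = vA := by
    funext j
    by_cases h : (j : ℕ) < ℓ
    · have hne : j ≠ i := by
        intro hc
        rw [hc, hieq] at h
        omega
      rw [Function.update_of_ne hne]
      show (if h : (j : ℕ) < ℓ then v ⟨(j : ℕ), by omega⟩ else b) = v j.castSucc
      rw [dif_pos h]
      exact congrArg v (Fin.ext rfl)
    · have hj : j = i := Fin.ext (by rw [hieq]; omega)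
      rw [hj, Function.update_self]
      show a = v i.castSucc
      exact congrArg v (Fin.ext rfl)
  have hupB : Function.update vB i b = vB := by
    funext j
    by_cases h : (j : ℕ) < ℓ
    · have hne : j ≠ i := by
        intro hc
        rw [hc, hieq] at h
        omega
      rw [Function.update_of_ne hne]
    · have hj : j = i := Fin.ext (by rw [hieq]; omega)
      rw [hj, Function.update_self]
      show b = if h : (i : ℕ) < ℓ then v ⟨(i : ℕ), by omega⟩ else b
      rw [dif_neg (by rw [hieq]; omega)]
  have hfam : ∀ t : ℂ,
      (fun j : Fin (ℓ + 1) =>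
        if h : (j : ℕ) < ℓ then v ⟨(j : ℕ), by omega⟩
        else t • v ⟨ℓ, by omega⟩ + v ⟨ℓ + 1, by omega⟩)
      = Function.update vB i (t • a + b) := by
    intro t
    funext j
    by_cases h : (j : ℕ) < ℓ
    · have hne : j ≠ i := by
        intro hc
        rw [hc, hieq] at h
        omega
      rw [Function.update_of_ne hne, dif_pos h]
      show _ = if h : (j : ℕ) < ℓ then v ⟨(j : ℕ), by omega⟩ else b
      rw [dif_pos h]
    · have hj : j = i := Fin.ext (by rw [hieq]; omega)
      rw [hj, Function.update_self, dif_neg (by rw [hieq]; omega)]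
  -- the two matrices
  set A : Matrix (Fin n) (Fin n) ℂ := T (wedgePow vA) with hA
  set B : Matrix (Fin n) (Fin n) ℂ := T (wedgePow vB) with hB
  have hTt' : ∀ t : ℂ, Tt t = t • A + B := by
    intro t
    rw [hTt t]
    have hw : wedgePow (d := d) (Function.update vB i (t • a + b))
        = t • wedgePow vA + wedgePow vB := by
      apply Subtype.ext
      show ExteriorAlgebra.ιMulti ℂ (ℓ + 1) (Function.update vB i (t • a + b))
        = t • ExteriorAlgebra.ιMulti ℂ (ℓ + 1) vA + ExteriorAlgebra.ιMulti ℂ (ℓ + 1) vB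
      rw [(ExteriorAlgebra.ιMulti ℂ (ℓ + 1)).map_update_add,
        (ExteriorAlgebra.ιMulti ℂ (ℓ + 1)).map_update_smul, hupA, hupB]
    have := congrArg T hw
    rw [map_add, map_smul] at this
    calc T (wedgePow fun j : Fin (ℓ + 1) =>
          if h : (j : ℕ) < ℓ then v ⟨(j : ℕ), by omega⟩
          else t • v ⟨ℓ, by omega⟩ + v ⟨ℓ + 1, by omega⟩)
        = T (wedgePow (Function.update vB i (t • a + b))) := by rw [hfam t]
      _ = t • A + B := this
  -- A is invertible
  have hdet : IsUnit A.det := (Matrix.isUnit_iff_isUnit_det A).mp hinv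
  -- the endomorphism whose eigenvectors the `w s` are
  set M : Module.End ℂ (Fin n → ℂ) := (-(A⁻¹ * B)).mulVecLin with hM
  have heig : ∀ s : Fin r, M (w s) = ts s • w s := by
    intro s
    have h0 := hker s
    rw [hTt' (ts s), Matrix.add_mulVec, Matrix.smul_mulVec] at h0
    have hBw : B.mulVec (w s) = -(ts s • A.mulVec (w s)) := by
      linear_combination (norm := module) h0
    show (-(A⁻¹ * B)).mulVec (w s) = ts s • w s
    rw [Matrix.neg_mulVec, ← Matrix.mulVec_mulVec, hBw]
    rw [Matrix.mulVec_neg, Matrix.mulVec_smul, Matrix.mulVec_mulVec,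
      Matrix.nonsing_inv_mul A hdet, Matrix.one_mulVec]
    module
  -- restrict to indices with nonzero vector; they are linearly independent eigenvectors
  intro s
  by_contra hws
  have hli : LinearIndependent ℂ (fun p : {s : Fin r // w s ≠ 0} => w p.1) := by
    apply Module.End.eigenvectors_linearIndependent' M (fun p => ts p.1)
      (fun p q hpq => Subtype.ext (hts hpq))
    intro p
    refine ⟨Module.End.mem_eigenspace_iff.mpr (heig p.1), p.2⟩
  have hsum' : ∑ p : {s : Fin r // w s ≠ 0}, w p.1 = 0 := by
    rw [← Finset.sum_subtype (Finset.univ.filter (fun s => w s ≠ 0))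
      (by simp) (fun s => w s), Finset.sum_filter_ne_zero]
    exact hsum
  have := Fintype.linearIndependent_iff.mp hli (fun _ => 1)
    (by simpa using hsum') ⟨s, hws⟩
  exact one_ne_zero this
end
end

section
/- Let X ⊆ ℙ(ℂ^{d+1}) be a σ-invariant subset, and let V ⊆ ℂ^{d+1} be a real ℂ-subspace of dimension d−k (with 1 ≤ d−k ≤ d) such that ℙ(V) ∩ X = ∅. Let f be the projection from ℙ(V): for x = [x̂] ∈ ℙ(ℂ^{d+1}) with x ∉ ℙ(V), f(x) = [P_{V^⊥}(x̂)] ∈ ℙ(V^⊥), where P_{V^⊥} is the orthogonal projection onto V^⊥. Then X is hyperbolic with respect to V if and only if for every x ∈ X, f(x) is a real point of ℙ(V^⊥) if and only if x is a real point. (Proposition 3.2.) -/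
/-!
Points of `ℙ(ℂ^{d+1})` are modelled by their nonzero representative vectors, and subsets of
`ℙ(ℂ^{d+1})` by their cones: sets of nonzero vectors stable under multiplication by nonzero
scalars. `σ` is coordinatewise complex conjugation; a point `[x]` is real iff `σ(x)` is a
scalar multiple of `x`, and a `ℂ`-subspace `W` is real iff `σ(W) = W` (equivalently, `σ`
maps `W` into `W`, `σ` being an involution). `ℂ^{d+1}` carries the standard Hermitian inner
product (`EuclideanSpace`).
-/

noncomputable section

/-- `ℂ^{d+1}` with the standard Hermitian inner product. -/
abbrev EE (d : ℕ) : Type := EuclideanSpace ℂ (Fin (d + 1))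

/-- Coordinatewise complex conjugation `σ`. -/
def conjE {d : ℕ} (x : EE d) : EE d := WithLp.toLp 2 (fun i => (starRingEnd ℂ) (x i))

/-- `x` represents a real point of projective space: `σ(x)` is proportional to `x`. -/
def IsRealPt {d : ℕ} (x : EE d) : Prop := ∃ c : ℂ, conjE x = c • x

/-- A real (σ-invariant) `ℂ`-subspace. -/
def IsRealSub {d : ℕ} (V : Submodule ℂ (EE d)) : Prop := ∀ x ∈ V, conjE x ∈ V

/-- `X` is the cone over a subset of projective space: `0 ∉ X` and `X` is stable under
multiplication by nonzero scalars. -/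
def IsProjCone {d : ℕ} (X : Set (EE d)) : Prop :=
  (0 : EE d) ∉ X ∧ ∀ x ∈ X, ∀ c : ℂ, c ≠ 0 → c • x ∈ X

/-- `X` is σ-invariant. -/
def IsSigmaInv {d : ℕ} (X : Set (EE d)) : Prop := ∀ x ∈ X, conjE x ∈ X

/-- The projection from `ℙ(V₀)`: orthogonal projection onto `V₀ᗮ` (on cones). -/
def projPerp {d : ℕ} (V₀ : Submodule ℂ (EE d)) (x : EE d) : EE d :=
  (V₀ᗮ.orthogonalProjectionOnto x : EE d)

/-- `X` (a cone over a subset of `ℙ(W)`) is hyperbolic, within the ambient subspace `W`,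
with respect to the real subspace `V ≤ W`: `ℙ(V) ∩ X = ∅` and for every real subspace
`U` with `V ≤ U ≤ W` and `dim U = dim V + 1`, every point of `X ∩ ℙ(U)` is real. -/
def HyperbolicIn {d : ℕ} (W : Submodule ℂ (EE d)) (X : Set (EE d))
    (V : Submodule ℂ (EE d)) : Prop :=
  (∀ x ∈ X, x ∉ V) ∧
    ∀ U : Submodule ℂ (EE d), U ≤ W → V ≤ U →
      Module.finrank ℂ U = Module.finrank ℂ V + 1 →
      IsRealSub U → ∀ x ∈ X, x ∈ U → IsRealPt x

/-- Hyperbolicity in the full ambient space `ℙ(ℂ^{d+1})`. -/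
def Hyperbolic {d : ℕ} (X : Set (EE d)) (V : Submodule ℂ (EE d)) : Prop :=
  HyperbolicIn ⊤ X V

/-!
For real `V`, conjugation `σ` commutes with the orthogonal projection `f` onto `Vᗮ`. If `f(x)`
is real then `σ(x) ∈ V ⊔ ℂx`, so `V ⊔ ℂx` is a real subspace of dimension `dim V + 1` through
`x`, and hyperbolicity makes `x` real. Conversely, if `U ⊇ V` is real of dimension
`dim V + 1` and contains `x`, then `f(x)` lies in the real line `U ⊓ Vᗮ`, hence is real.
-/

open Module Submodule

variable {d : ℕ}

def conjEₗ : EE d →ₗ⋆[ℂ] EE d where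
  toFun := conjE
  map_add' x y := by ext i; simp [conjE]
  map_smul' c x := by ext i; simp [conjE]

@[simp]
lemma conjEₗ_apply (x : EE d) : conjEₗ x = conjE x := rfl

lemma conjE_add (x y : EE d) : conjE (x + y) = conjE x + conjE y :=
  map_add conjEₗ x y

lemma conjE_conjE (x : EE d) : conjE (conjE x) = x := by
  ext i; simp [conjE]

lemma inner_conjE (x y : EE d) :
    inner ℂ (conjE x) (conjE y) = starRingEnd ℂ (inner ℂ x y) := by
  simp [conjE, PiLp.inner_apply, map_sum, mul_comm]

lemma isRealSub_iff_map_le (V : Submodule ℂ (EE d)) : IsRealSub V ↔ V.map conjEₗ ≤ V := by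
  simp [IsRealSub, SetLike.le_def]

lemma IsRealSub.inf {U W : Submodule ℂ (EE d)} (hU : IsRealSub U) (hW : IsRealSub W) :
    IsRealSub (U ⊓ W) :=
  fun x hx => ⟨hU x hx.1, hW x hx.2⟩

lemma IsRealSub.orthogonal {V : Submodule ℂ (EE d)} (hV : IsRealSub V) : IsRealSub Vᗮ := by
  intro y hy v hv
  have h : inner ℂ (conjE v) y = 0 := hy (conjE v) (hV v hv)
  rw [← conjE_conjE y, inner_conjE, map_eq_zero] at h
  exact h

lemma IsRealSub.sup_span_singleton {V : Submodule ℂ (EE d)} (hV : IsRealSub V) {x : EE d}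
    (hx : conjE x ∈ V ⊔ span ℂ {x}) : IsRealSub (V ⊔ span ℂ {x}) := by
  rw [isRealSub_iff_map_le] at hV ⊢
  rw [Submodule.map_sup, map_span, Set.image_singleton, conjEₗ_apply]
  exact sup_le (hV.trans le_sup_left) (span_singleton_le_iff_mem _ _ |>.2 hx)

lemma IsRealSub.isRealPt_of_finrank_eq_one {W : Submodule ℂ (EE d)} (hW : IsRealSub W)
    (h1 : finrank ℂ W = 1) {w : EE d} (hw : w ∈ W) : IsRealPt w := by
  rcases eq_or_ne w 0 with rfl | hw0
  · exact ⟨0, by ext i; simp [conjE]⟩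
  obtain ⟨c, hc⟩ := (finrank_eq_one_iff_of_nonzero' (⟨w, hw⟩ : W) (by simpa using hw0)).1 h1
    ⟨conjE w, hW w hw⟩
  exact ⟨c, congrArg Subtype.val hc.symm⟩

lemma projPerp_eq_sub (V : Submodule ℂ (EE d)) (x : EE d) :
    projPerp V x = x - V.starProjection x :=
  starProjection_orthogonal_val x

lemma projPerp_mem_orthogonal (V : Submodule ℂ (EE d)) (x : EE d) : projPerp V x ∈ Vᗮ :=
  (Vᗮ.orthogonalProjectionOnto x).2

lemma sub_projPerp_mem (V : Submodule ℂ (EE d)) (x : EE d) : x - projPerp V x ∈ V := by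
  rw [projPerp_eq_sub, sub_sub_cancel]
  exact V.starProjection_apply_mem x

lemma projPerp_mem_of_le {V U : Submodule ℂ (EE d)} (hVU : V ≤ U) {x : EE d} (hx : x ∈ U) :
    projPerp V x ∈ U := by
  rw [projPerp_eq_sub]
  exact U.sub_mem hx (hVU (V.starProjection_apply_mem x))

lemma conjE_projPerp {V : Submodule ℂ (EE d)} (hV : IsRealSub V) (x : EE d) :
    conjE (projPerp V x) = projPerp V (conjE x) := by
  symm
  refine eq_starProjection_of_mem_orthogonal' (hV.orthogonal _ (projPerp_mem_orthogonal V x))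
    (V.le_orthogonal_orthogonal (hV _ (sub_projPerp_mem V x))) ?_
  rw [← conjE_add, add_sub_cancel]

lemma IsRealPt.projPerp {V : Submodule ℂ (EE d)} (hV : IsRealSub V) {x : EE d}
    (hx : IsRealPt x) : IsRealPt (projPerp V x) := by
  obtain ⟨c, hc⟩ := hx
  refine ⟨c, ?_⟩
  rw [conjE_projPerp hV, hc]
  exact map_smul (Vᗮ.starProjection) c x

lemma conjE_mem_sup_span_singleton {V : Submodule ℂ (EE d)} (hV : IsRealSub V) {x : EE d}
    (hx : IsRealPt (projPerp V x)) : conjE x ∈ V ⊔ span ℂ {x} := by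
  obtain ⟨c, hc⟩ := hx
  have hv : x - projPerp V x ∈ V := sub_projPerp_mem V x
  have hconj : conjE x = (conjE (x - projPerp V x) - c • (x - projPerp V x)) + c • x := by
    calc conjE x = conjE (x - projPerp V x) + conjE (projPerp V x) := by
          rw [← conjE_add, sub_add_cancel]
      _ = _ := by rw [hc, smul_sub]; abel
  rw [hconj]
  exact add_mem (mem_sup_left (V.sub_mem (hV _ hv) (V.smul_mem c hv)))
    (mem_sup_right (smul_mem _ c (mem_span_singleton_self x)))

theorem stmt8_general (d : ℕ)
    (X : Set (EE d))
    (V : Submodule ℂ (EE d)) (hVreal : IsRealSub V)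
    (hdisj : ∀ x ∈ X, x ∉ V) :
    Hyperbolic X V ↔ ∀ x ∈ X, (IsRealPt (projPerp V x) ↔ IsRealPt x) := by
  constructor
  · rintro ⟨-, hhyp⟩ x hxX
    refine ⟨fun hfx => ?_, IsRealPt.projPerp hVreal⟩
    have hUreal := hVreal.sup_span_singleton (conjE_mem_sup_span_singleton hVreal hfx)
    exact hhyp _ le_top le_sup_left (finrank_sup_span_singleton (hdisj x hxX)) hUreal x hxX
      (mem_sup_right (mem_span_singleton_self x))
  · intro hiff
    refine ⟨hdisj, fun U _ hVU hdimU hUreal x hxX hxU => (hiff x hxX).1 ?_⟩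
    have hline : finrank ℂ (Vᗮ ⊓ U : Submodule ℂ (EE d)) = 1 :=
      finrank_add_inf_finrank_orthogonal' hVU hdimU.symm
    exact (hVreal.orthogonal.inf hUreal).isRealPt_of_finrank_eq_one hline
      ⟨projPerp_mem_orthogonal V x, projPerp_mem_of_le hVU hxU⟩

theorem stmt8 (d ℓ : ℕ) (hℓ1 : 1 ≤ ℓ) (hℓ2 : ℓ ≤ d)
    (X : Set (EE d)) (hXcone : IsProjCone X) (hXσ : IsSigmaInv X)
    (V : Submodule ℂ (EE d)) (hVreal : IsRealSub V)
    (hVdim : Module.finrank ℂ V = ℓ)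
    (hdisj : ∀ x ∈ X, x ∉ V) :
    Hyperbolic X V ↔ ∀ x ∈ X, (IsRealPt (projPerp V x) ↔ IsRealPt x) :=
  stmt8_general d X V hVreal hdisj
end
end

section
/- Let V and V' be ℓ-dimensional linear subspaces of ℝ^{d+1} (1 ≤ ℓ ≤ d+1), let P_V and P_{V'} denote the orthogonal projections of ℝ^{d+1} onto V and V' respectively, and let ε > 0. If the operator norm satisfies ‖P_V − P_{V'}‖ < ε, then there exist orthonormal bases v_0,…,v_{ℓ−1} of V and v'_0,…,v'_{ℓ−1} of V' such that ‖v_j − v'_j‖ < √2·ε for every j = 0,…,ℓ−1. (Lemma 3.7, first part.) -/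
/-!
Write `P, P'` for the projections onto `V, V'` and `δ = ‖P - P'‖`. The compression of `P'` to `V`
(i.e. `P P'` restricted to `V`) is symmetric, so `V` has an orthonormal eigenbasis `vⱼ`; since
`⟪P' vᵢ, P' vⱼ⟫ = ⟪vᵢ, P P' vⱼ⟫`, the vectors `P' vⱼ` are pairwise orthogonal. Pythagoras and
`‖vⱼ - P' vⱼ‖ ≤ δ` give `‖P' vⱼ‖² ≥ 1 - δ²`, so for `δ < 1` normalizing them yields an orthonormal
basis `v'ⱼ` of `V'` with `⟪vⱼ, v'ⱼ⟫ = ‖P' vⱼ‖ ≥ 1 - δ²`, whence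
`‖vⱼ - v'ⱼ‖² = 2 - 2⟪vⱼ, v'ⱼ⟫ ≤ 2δ² < 2ε²`. If `δ ≥ 1` then `ε > 1`, and any two orthonormal bases,
with signs flipped so that `⟪vⱼ, v'ⱼ⟫ ≥ 0`, already satisfy `‖vⱼ - v'ⱼ‖² ≤ 2 < 2ε²`.
-/

noncomputable section

/-- `ℝ^{d+1}` with the standard inner product. -/
abbrev ER (d : ℕ) : Type := EuclideanSpace ℝ (Fin (d + 1))

/-- The orthogonal projection onto `V`, as an endomorphism of `ℝ^{d+1}`. -/
def projCLM {d : ℕ} (V : Submodule ℝ (ER d)) : ER d →L[ℝ] ER d :=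
  V.subtypeL.comp V.orthogonalProjection

open Module Submodule
open scoped RealInnerProductSpace

variable {E : Type*} [NormedAddCommGroup E] [InnerProductSpace ℝ E]

theorem Orthonormal.span_range_eq_of_finrank_eq {ι : Type*} [Fintype ι] {f : ι → E}
    (hf : Orthonormal ℝ f) {W : Submodule ℝ E} [FiniteDimensional ℝ W] (hmem : ∀ i, f i ∈ W)
    (hW : finrank ℝ W = Fintype.card ι) : span ℝ (Set.range f) = W :=
  eq_of_le_of_finrank_eq (span_le.2 (Set.range_subset_iff.2 hmem))
    (by rw [finrank_span_eq_card hf.linearIndependent, hW])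

theorem orthonormal_inv_norm_smul {ι : Type*} {f : ι → E}
    (hf : Pairwise fun i j => ⟪f i, f j⟫ = 0) (h0 : ∀ i, f i ≠ 0) :
    Orthonormal ℝ fun i => ‖f i‖⁻¹ • f i :=
  ⟨fun i => norm_smul_inv_norm (h0 i), fun i j hij => by
    simp only [real_inner_smul_left, real_inner_smul_right, hf hij, mul_zero]⟩

theorem norm_sub_lt_sqrt_two_mul_of_one_sub_sq_lt_inner {x y : E} (hx : ‖x‖ = 1) (hy : ‖y‖ = 1)
    {ε : ℝ} (hε : 0 ≤ ε) (h : 1 - ε ^ 2 < ⟪x, y⟫) : ‖x - y‖ < Real.sqrt 2 * ε := by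
  have hsq : ‖x - y‖ ^ 2 < (Real.sqrt 2 * ε) ^ 2 := by
    rw [norm_sub_sq_real, hx, hy, mul_pow, Real.sq_sqrt zero_le_two]
    linarith
  exact lt_of_pow_lt_pow_left₀ 2 (by positivity) hsq

theorem exists_orthonormal_inner_nonneg {ℓ : ℕ} (V V' : Submodule ℝ E) [FiniteDimensional ℝ V]
    [FiniteDimensional ℝ V'] (hV : finrank ℝ V = ℓ) (hV' : finrank ℝ V' = ℓ) :
    ∃ v v' : Fin ℓ → E,
      Orthonormal ℝ v ∧ span ℝ (Set.range v) = V ∧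
      Orthonormal ℝ v' ∧ span ℝ (Set.range v') = V' ∧
      ∀ j, 0 ≤ ⟪v j, v' j⟫ := by
  let b := (stdOrthonormalBasis ℝ V).reindex (finCongr hV)
  let b' := (stdOrthonormalBasis ℝ V').reindex (finCongr hV')
  have hb : Orthonormal ℝ fun j => (b j : E) := b.orthonormal.comp_linearIsometry V.subtypeₗᵢ
  have hb' : Orthonormal ℝ fun j => (b' j : E) := b'.orthonormal.comp_linearIsometry V'.subtypeₗᵢ
  let v' j : E := if 0 ≤ ⟪(b j : E), b' j⟫ then b' j else -b' j
  have hv' : Orthonormal ℝ v' :=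
    hb'.orthonormal_of_forall_eq_or_eq_neg fun j => by unfold v'; split_ifs <;> simp
  have hv'V' : ∀ j, v' j ∈ V' := fun j => by
    unfold v'; split_ifs
    exacts [(b' j).2, neg_mem (b' j).2]
  refine ⟨_, v', hb, hb.span_range_eq_of_finrank_eq (fun j => (b j).2) (by simp [hV]), hv',
    hv'.span_range_eq_of_finrank_eq hv'V' (by simp [hV']), fun j => ?_⟩
  unfold v'
  split_ifs with h
  · exact h
  · rw [inner_neg_right]
    linarith

section Compression

variable (V V' : Submodule ℝ E) [V.HasOrthogonalProjection] [V'.HasOrthogonalProjection]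

theorem inner_starProjection_starProjection (x y : E) :
    ⟪V.starProjection x, V.starProjection y⟫ = ⟪x, V.starProjection y⟫ := by
  rw [inner_starProjection_left_eq_right,
    starProjection_eq_self_iff.2 (V.starProjection_apply_mem y)]

def compressStarProjection : V →ₗ[ℝ] V :=
  (V.orthogonalProjectionOnto ∘L V'.starProjection ∘L V.subtypeL).toLinearMap

theorem inner_compressStarProjection (x y : V) :
    ⟪(x : E), compressStarProjection V V' y⟫ = ⟪V'.starProjection x, V'.starProjection y⟫ := by
  change ⟪(x : E), V.starProjection (V'.starProjection y)⟫ = _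
  rw [← inner_starProjection_left_eq_right, starProjection_eq_self_iff.2 x.2,
    inner_starProjection_starProjection]

theorem isSymmetric_compressStarProjection : (compressStarProjection V V').IsSymmetric :=
  fun x y => by
    rw [real_inner_comm]
    change ⟪(y : E), compressStarProjection V V' x⟫ = ⟪(x : E), compressStarProjection V V' y⟫
    rw [inner_compressStarProjection, inner_compressStarProjection, real_inner_comm]

theorem one_sub_sq_le_norm_starProjection_sq {x : E} (hx : x ∈ V) (hx1 : ‖x‖ = 1) :
    1 - ‖V.starProjection - V'.starProjection‖ ^ 2 ≤ ‖V'.starProjection x‖ ^ 2 := by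
  have hdiff : ‖x - V'.starProjection x‖ ≤ ‖V.starProjection - V'.starProjection‖ := by
    simpa [starProjection_eq_self_iff.2 hx, hx1] using
      (V.starProjection - V'.starProjection).le_opNorm x
  have hpyth := V'.norm_sq_eq_add_norm_sq_starProjection x
  rw [starProjection_orthogonal_val, hx1] at hpyth
  have := pow_le_pow_left₀ (norm_nonneg _) hdiff 2
  linarith

end Compression

theorem exists_orthonormal_one_sub_sq_le_inner {ℓ : ℕ} (V V' : Submodule ℝ E)
    [FiniteDimensional ℝ V] [FiniteDimensional ℝ V'] (hV : finrank ℝ V = ℓ)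
    (hV' : finrank ℝ V' = ℓ) (h : ‖V.starProjection - V'.starProjection‖ < 1) :
    ∃ v v' : Fin ℓ → E,
      Orthonormal ℝ v ∧ span ℝ (Set.range v) = V ∧
      Orthonormal ℝ v' ∧ span ℝ (Set.range v') = V' ∧
      ∀ j, 1 - ‖V.starProjection - V'.starProjection‖ ^ 2 ≤ ⟪v j, v' j⟫ := by
  have hT := isSymmetric_compressStarProjection V V'
  let e := hT.eigenvectorBasis hV
  let v j : E := e j
  let w j : E := V'.starProjection (v j)
  have hv : Orthonormal ℝ v := e.orthonormal.comp_linearIsometry V.subtypeₗᵢ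
  have hw_sq j : 1 - ‖V.starProjection - V'.starProjection‖ ^ 2 ≤ ‖w j‖ ^ 2 :=
    one_sub_sq_le_norm_starProjection_sq V V' (e j).2 (hv.1 j)
  have hw_pos j : 0 < ‖w j‖ := by
    have := pow_lt_one₀ (norm_nonneg _) h two_ne_zero
    nlinarith [hw_sq j, norm_nonneg (w j)]
  have hw_orth : Pairwise fun i j => ⟪w i, w j⟫ = 0 := fun i j hij => by
    change ⟪w i, w j⟫ = 0
    rw [← inner_compressStarProjection, hT.apply_eigenvectorBasis, coe_smul,
      real_inner_smul_right, hv.inner_eq_zero hij, mul_zero]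
  let v' j := ‖w j‖⁻¹ • w j
  have hv' : Orthonormal ℝ v' :=
    orthonormal_inv_norm_smul hw_orth fun j => norm_pos_iff.1 (hw_pos j)
  refine ⟨v, v', hv, hv.span_range_eq_of_finrank_eq (fun j => (e j).2) (by simp [hV]), hv',
    hv'.span_range_eq_of_finrank_eq (fun j => smul_mem _ _ (V'.starProjection_apply_mem _))
      (by simp [hV']), fun j => ?_⟩
  have hinner : ⟪v j, v' j⟫ = ‖w j‖ := by
    have : ⟪v j, w j⟫ = ‖w j‖ ^ 2 := by
      rw [← real_inner_self_eq_norm_sq, inner_starProjection_starProjection]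
    rw [real_inner_smul_right, this]
    field_simp [(hw_pos j).ne']
  have hw_le : ‖w j‖ ≤ 1 := (V'.norm_starProjection_apply_le (v j)).trans_eq (hv.1 j)
  rw [hinner]
  nlinarith [hw_sq j, hw_pos j]

theorem projCLM_eq_starProjection {d : ℕ} (V : Submodule ℝ (ER d)) :
    projCLM V = V.starProjection :=
  rfl

theorem stmt13_general (d ℓ : ℕ)
    (V V' : Submodule ℝ (ER d))
    (hV : Module.finrank ℝ V = ℓ) (hV' : Module.finrank ℝ V' = ℓ)
    (ε : ℝ) (hε : 0 < ε)
    (h : ‖projCLM V - projCLM V'‖ < ε) :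
    ∃ v v' : Fin ℓ → ER d,
      Orthonormal ℝ v ∧ Submodule.span ℝ (Set.range v) = V ∧
      Orthonormal ℝ v' ∧ Submodule.span ℝ (Set.range v') = V' ∧
      ∀ j : Fin ℓ, ‖v j - v' j‖ < Real.sqrt 2 * ε := by
  suffices ∃ v v' : Fin ℓ → ER d,
      Orthonormal ℝ v ∧ span ℝ (Set.range v) = V ∧
      Orthonormal ℝ v' ∧ span ℝ (Set.range v') = V' ∧
      ∀ j, 1 - ε ^ 2 < ⟪v j, v' j⟫ by
    obtain ⟨v, v', hv, hvV, hv', hv'V', hinner⟩ := this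
    exact ⟨v, v', hv, hvV, hv', hv'V', fun j =>
      norm_sub_lt_sqrt_two_mul_of_one_sub_sq_lt_inner (hv.1 j) (hv'.1 j) hε.le (hinner j)⟩
  rw [projCLM_eq_starProjection, projCLM_eq_starProjection] at h
  rcases lt_or_ge ‖V.starProjection - V'.starProjection‖ 1 with h1 | h1
  · obtain ⟨v, v', hv, hvV, hv', hv'V', hinner⟩ :=
      exists_orthonormal_one_sub_sq_le_inner V V' hV hV' h1
    have hsq : ‖V.starProjection - V'.starProjection‖ ^ 2 < ε ^ 2 :=
      pow_lt_pow_left₀ h (norm_nonneg _) two_ne_zero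
    exact ⟨v, v', hv, hvV, hv', hv'V', fun j => by linarith [hinner j]⟩
  · obtain ⟨v, v', hv, hvV, hv', hv'V', hinner⟩ := exists_orthonormal_inner_nonneg V V' hV hV'
    exact ⟨v, v', hv, hvV, hv', hv'V', fun j => by nlinarith [hinner j]⟩

theorem stmt13 (d ℓ : ℕ) (hℓ1 : 1 ≤ ℓ) (hℓ2 : ℓ ≤ d + 1)
    (V V' : Submodule ℝ (ER d))
    (hV : Module.finrank ℝ V = ℓ) (hV' : Module.finrank ℝ V' = ℓ)
    (ε : ℝ) (hε : 0 < ε)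
    (h : ‖projCLM V - projCLM V'‖ < ε) :
    ∃ v v' : Fin ℓ → ER d,
      Orthonormal ℝ v ∧ Submodule.span ℝ (Set.range v) = V ∧
      Orthonormal ℝ v' ∧ Submodule.span ℝ (Set.range v') = V' ∧
      ∀ j : Fin ℓ, ‖v j - v' j‖ < Real.sqrt 2 * ε :=
  stmt13_general d ℓ V V' hV hV' ε hε h
end
end
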